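/- For any two codewords c₁ = ([a(x)g(x)f₀(x)],…,[a(x)g(x)f_{ℓ−1}(x)]) and c₂ = ([b(x)g(x)f₀(x)],…,[b(x)g(x)f_{ℓ−1}(x)]) of a 1-generator quasi-cyclic code, their Euclidean inner product equals ⟨[a(x)g(x) Σ_{i=0}^{ℓ−1} fᵢ(x)f̄ᵢ(x)], [b(x)g(x)]⟩. -/

import Mathlib

open Polynomial Finset

/-- The reciprocal `f̄(x)`: the image of `xⁿ f(x⁻¹)` in `R = F[x]/⟨xⁿ-1⟩`. -/
noncomputable def cbar {F : Type*} [Field F] (n : ℕ) (f : F[X]) : F[X] :=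
  ∑ i ∈ Finset.range n, C ((f %ₘ (X ^ n - 1)).coeff ((n - i) % n)) * X ^ i

section Aux

variable {F : Type*} [Field F] {n : ℕ}

private lemma natmod_key1 (hn : 0 < n) {i k : ℕ} (hi : i < n) (hk : k < n) :
    (i + (k + n - i) % n) % n = k := by
  rw [Nat.add_mod_mod]
  have h : i + (k + n - i) = k + n := by omega
  rw [h, Nat.add_mod_right, Nat.mod_eq_of_lt hk]

private lemma natmod_key2 (hn : 0 < n) {i j j' : ℕ} (hj : j < n) (hj' : j' < n)
    (h : (i + j) % n = (i + j') % n) : j = j' := by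
  have h2 : j ≡ j' [MOD n] := Nat.ModEq.add_left_cancel' i h
  rw [Nat.ModEq, Nat.mod_eq_of_lt hj, Nat.mod_eq_of_lt hj'] at h2
  exact h2

private lemma natmod_key3 (hn : 0 < n) {i k : ℕ} (hi : i < n) (hk : k < n) :
    (n - (k + n - i) % n) % n = (i + n - k) % n := by
  set d := (k + n - i) % n with hd
  set e := (i + n - k) % n with he
  have hdn : d < n := Nat.mod_lt _ hn
  have hen : e < n := Nat.mod_lt _ hn
  have hsum : (e + d) % n = 0 := by
    rw [he, hd, ← Nat.add_mod]
    have h2 : (i + n - k) + (k + n - i) = 2 * n := by omega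
    rw [h2, Nat.mul_mod_left]
  have hcases : e + d = 0 ∨ e + d = n := by
    rcases lt_or_ge (e + d) n with h | h
    · left; rwa [Nat.mod_eq_of_lt h] at hsum
    · right
      rw [Nat.mod_eq_sub_mod h] at hsum
      have h2 : e + d - n < n := by omega
      rw [Nat.mod_eq_of_lt h2] at hsum
      omega
  rcases hcases with h | h
  · have hd0 : d = 0 := by omega
    have he0 : e = 0 := by omega
    rw [hd0, he0, Nat.sub_zero, Nat.mod_self]
  · have hd0 : 0 < d := by omega
    rw [Nat.mod_eq_of_lt (by omega : n - d < n)]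
    omega

private lemma monicM (hn : 0 < n) : (X ^ n - 1 : F[X]).Monic := by
  simpa using monic_X_pow_sub_C (1 : F) hn.ne'

private lemma degM (hn : 0 < n) : (X ^ n - 1 : F[X]).degree = n := by
  simpa using degree_X_pow_sub_C hn (1 : F)

private lemma mod_eq_of_dvd_sub (hn : 0 < n) {p q : F[X]}
    (h : (X ^ n - 1 : F[X]) ∣ p - q) : p %ₘ (X ^ n - 1) = q %ₘ (X ^ n - 1) := by
  have hpq : p = q + (p - q) := by ring
  rw [hpq, add_modByMonic, (modByMonic_eq_zero_iff_dvd (monicM hn)).2 h, add_zero]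

private lemma Xpow_mod (hn : 0 < n) (m : ℕ) :
    (X : F[X]) ^ m %ₘ (X ^ n - 1) = X ^ (m % n) := by
  have h1 : (X ^ n - 1 : F[X]) ∣ X ^ m - X ^ (m % n) := by
    have h2 : (X : F[X]) ^ m - X ^ (m % n)
        = ((X ^ n) ^ (m / n) - 1 ^ (m / n)) * X ^ (m % n) := by
      rw [sub_mul, one_pow, one_mul, ← pow_mul, ← pow_add, Nat.div_add_mod]
    rw [h2]
    exact Dvd.dvd.mul_right (sub_dvd_pow_sub_pow _ _ _) _
  rw [mod_eq_of_dvd_sub hn h1]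
  apply (modByMonic_eq_self_iff (monicM hn)).2
  rw [degM hn, degree_X_pow]
  exact_mod_cast Nat.mod_lt _ hn

private lemma sum_modByMonic {ι : Type*} (s : Finset ι) (g : ι → F[X]) (q : F[X]) :
    (∑ i ∈ s, g i) %ₘ q = ∑ i ∈ s, g i %ₘ q := by
  classical
  induction s using Finset.cons_induction with
  | empty => simp
  | cons a s ha ih => rw [Finset.sum_cons, Finset.sum_cons, add_modByMonic, ih]

private lemma natDeg_mod_lt (hn : 0 < n) (p : F[X]) :
    (p %ₘ (X ^ n - 1)).natDegree < n := by
  rcases eq_or_ne (p %ₘ (X ^ n - 1)) 0 with h | h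
  · simpa [h] using hn
  · rw [natDegree_lt_iff_degree_lt h]
    have h2 := degree_modByMonic_lt p (monicM hn)
    rwa [degM hn] at h2

private lemma mul_mod_left' (hn : 0 < n) (p q : F[X]) :
    (p * q) %ₘ (X ^ n - 1) = (p %ₘ (X ^ n - 1) * q) %ₘ (X ^ n - 1) := by
  apply _root_.mod_eq_of_dvd_sub hn
  refine ⟨(p /ₘ (X ^ n - 1)) * q, ?_⟩
  have h := modByMonic_eq_sub_mul_div p (X ^ n - 1)
  rw [h]; ring

private lemma mul_mod_right' (hn : 0 < n) (p q : F[X]) :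
    (p * q) %ₘ (X ^ n - 1) = (p * (q %ₘ (X ^ n - 1))) %ₘ (X ^ n - 1) := by
  apply _root_.mod_eq_of_dvd_sub hn
  refine ⟨p * (q /ₘ (X ^ n - 1)), ?_⟩
  have h := modByMonic_eq_sub_mul_div q (X ^ n - 1)
  rw [h]; ring

/-- Coefficient formula for the product modulo `Xⁿ - 1`. -/
private lemma coeff_mul_mod (hn : 0 < n) (p q : F[X]) {k : ℕ} (hk : k < n) :
    ((p * q) %ₘ (X ^ n - 1)).coeff k
      = ∑ i ∈ range n, (p %ₘ (X ^ n - 1)).coeff i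
          * (q %ₘ (X ^ n - 1)).coeff ((k + n - i) % n) := by
  set M : F[X] := X ^ n - 1 with hM
  set p' := p %ₘ M with hp'
  set q' := q %ₘ M with hq'
  have hstep : (p * q) %ₘ M = (p' * q') %ₘ M := by
    rw [mul_mod_left' hn, ← hp', mul_mod_right' hn, ← hq']
  have hpexp : p' = ∑ i ∈ range n, monomial i (p'.coeff i) :=
    p'.as_sum_range' n (natDeg_mod_lt hn p)
  have hqexp : q' = ∑ j ∈ range n, monomial j (q'.coeff j) :=
    q'.as_sum_range' n (natDeg_mod_lt hn q)
  have hprod : (p' * q') %ₘ M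
      = ∑ i ∈ range n, ∑ j ∈ range n,
          (p'.coeff i * q'.coeff j) • (X : F[X]) ^ ((i + j) % n) := by
    conv_lhs => rw [hpexp, hqexp, Finset.sum_mul_sum]
    rw [sum_modByMonic]
    refine Finset.sum_congr rfl fun i _ => ?_
    rw [sum_modByMonic]
    refine Finset.sum_congr rfl fun j _ => ?_
    rw [monomial_mul_monomial, ← C_mul_X_pow_eq_monomial, ← smul_eq_C_mul,
      smul_modByMonic, Xpow_mod hn]
  rw [hstep, hprod]
  rw [finset_sum_coeff]
  refine Finset.sum_congr rfl fun i hi => ?_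
  rw [finset_sum_coeff]
  have hi' : i < n := mem_range.mp hi
  have hmem : (k + n - i) % n ∈ range n := mem_range.mpr (Nat.mod_lt _ hn)
  rw [Finset.sum_eq_single_of_mem _ hmem]
  · rw [coeff_smul, coeff_X_pow, if_pos (natmod_key1 hn hi' hk).symm]
    simp [smul_eq_mul]
  · intro j hj hne
    rw [coeff_smul, coeff_X_pow]
    have hj' : j < n := mem_range.mp hj
    rw [if_neg, smul_zero]
    intro hkk
    exact hne (natmod_key2 hn hj' (Nat.mod_lt _ hn)
      (by rw [natmod_key1 hn hi' hk, ← hkk]))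

private lemma cbar_coeff (f : F[X]) {t : ℕ} (ht : t < n) :
    (cbar n f).coeff t = (f %ₘ (X ^ n - 1)).coeff ((n - t) % n) := by
  unfold cbar
  rw [finset_sum_coeff]
  simp only [coeff_C_mul, coeff_X_pow, mul_ite, mul_one, mul_zero]
  rw [Finset.sum_ite_eq (range n) t, if_pos (mem_range.mpr ht)]

private lemma cbar_mod (hn : 0 < n) (f : F[X]) :
    cbar n f %ₘ (X ^ n - 1) = cbar n f := by
  apply (modByMonic_eq_self_iff (monicM hn)).2
  rw [degM hn]
  unfold cbar
  refine lt_of_le_of_lt (degree_sum_le _ _) ?_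
  rw [Finset.sup_lt_iff (by exact_mod_cast WithBot.bot_lt_coe n)]
  intro i hi
  refine lt_of_le_of_lt (degree_C_mul_X_pow_le _ _) ?_
  exact_mod_cast mem_range.mp hi

/-- Multiplication by `f̄` is adjoint to multiplication by `f`. -/
private lemma adjoint (hn : 0 < n) (U Q f : F[X]) :
    ∑ k ∈ range n, (U %ₘ (X ^ n - 1)).coeff k * ((Q * f) %ₘ (X ^ n - 1)).coeff k
      = ∑ k ∈ range n,
          ((U * cbar n f) %ₘ (X ^ n - 1)).coeff k * (Q %ₘ (X ^ n - 1)).coeff k := by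
  set M : F[X] := X ^ n - 1 with hM
  have hL : ∑ k ∈ range n, (U %ₘ M).coeff k * ((Q * f) %ₘ M).coeff k
      = ∑ k ∈ range n, ∑ j ∈ range n,
          (U %ₘ M).coeff k * ((Q %ₘ M).coeff j * (f %ₘ M).coeff ((k + n - j) % n)) := by
    refine Finset.sum_congr rfl fun k hk => ?_
    rw [coeff_mul_mod hn Q f (mem_range.mp hk), Finset.mul_sum]
  have hR : ∑ k ∈ range n, ((U * cbar n f) %ₘ M).coeff k * (Q %ₘ M).coeff k
      = ∑ k ∈ range n, ∑ i ∈ range n,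
          (U %ₘ M).coeff i * ((f %ₘ M).coeff ((i + n - k) % n) * (Q %ₘ M).coeff k) := by
    refine Finset.sum_congr rfl fun k hk => ?_
    have hk' : k < n := mem_range.mp hk
    rw [coeff_mul_mod hn U (cbar n f) hk', Finset.sum_mul]
    refine Finset.sum_congr rfl fun i hi => ?_
    have hi' : i < n := mem_range.mp hi
    rw [cbar_mod hn, cbar_coeff (f := f) (Nat.mod_lt _ hn),
      natmod_key3 hn hi' hk', mul_assoc]
  rw [hL, hR, Finset.sum_comm]
  refine Finset.sum_congr rfl fun i _ => Finset.sum_congr rfl fun k _ => ?_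
  ring

end Aux

/-- For codewords `c₁ = ([a g f₀], …, [a g f_{ℓ-1}])` and
`c₂ = ([b g f₀], …, [b g f_{ℓ-1}])` of a 1-generator quasi-cyclic code, the Euclidean inner
product `⟨c₁, c₂⟩` equals `⟨[a g ∑ᵢ fᵢ f̄ᵢ], [b g]⟩`. -/
theorem qc_euclidean_inner_eq
    {F : Type*} [Field F] [Fintype F] {n ℓ : ℕ} (hn : 0 < n)
    (a b g : F[X]) (f : Fin ℓ → F[X]) :
    ∑ j : Fin ℓ, ∑ i : Fin n,
        ((a * g * f j) %ₘ (X ^ n - 1)).coeff i.val *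
          ((b * g * f j) %ₘ (X ^ n - 1)).coeff i.val =
      ∑ i : Fin n,
        ((a * g * ∑ j, f j * cbar n (f j)) %ₘ (X ^ n - 1)).coeff i.val *
          ((b * g) %ₘ (X ^ n - 1)).coeff i.val := by
  set M : F[X] := X ^ n - 1 with hM
  have hstep1 : ∀ j : Fin ℓ,
      ∑ i : Fin n, ((a * g * f j) %ₘ M).coeff i.val * ((b * g * f j) %ₘ M).coeff i.val
        = ∑ k ∈ range n,
            ((a * g * f j * cbar n (f j)) %ₘ M).coeff k * ((b * g) %ₘ M).coeff k := by
    intro j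
    rw [Fin.sum_univ_eq_sum_range
      (fun i => ((a * g * f j) %ₘ M).coeff i * ((b * g * f j) %ₘ M).coeff i)]
    have hbg : b * g * f j = (b * g) * f j := by ring
    rw [hbg]
    exact adjoint hn (a * g * f j) (b * g) (f j)
  calc ∑ j : Fin ℓ, ∑ i : Fin n,
        ((a * g * f j) %ₘ M).coeff i.val * ((b * g * f j) %ₘ M).coeff i.val
      = ∑ j : Fin ℓ, ∑ k ∈ range n,
          ((a * g * f j * cbar n (f j)) %ₘ M).coeff k * ((b * g) %ₘ M).coeff k := by
        exact Finset.sum_congr rfl fun j _ => hstep1 j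
    _ = ∑ k ∈ range n, (∑ j : Fin ℓ,
          ((a * g * f j * cbar n (f j)) %ₘ M).coeff k) * ((b * g) %ₘ M).coeff k := by
        rw [Finset.sum_comm]
        exact Finset.sum_congr rfl fun k _ => by rw [Finset.sum_mul]
    _ = ∑ k ∈ range n,
          ((a * g * ∑ j, f j * cbar n (f j)) %ₘ M).coeff k * ((b * g) %ₘ M).coeff k := by
        refine Finset.sum_congr rfl fun k _ => ?_
        congr 1
        rw [Finset.mul_sum, sum_modByMonic, finset_sum_coeff]
        refine Finset.sum_congr rfl fun j _ => ?_
        congr 2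
        ring
    _ = ∑ i : Fin n,
          ((a * g * ∑ j, f j * cbar n (f j)) %ₘ M).coeff i.val *
            ((b * g) %ₘ M).coeff i.val := by
        rw [Fin.sum_univ_eq_sum_range
          (fun k => ((a * g * ∑ j, f j * cbar n (f j)) %ₘ M).coeff k *
            ((b * g) %ₘ M).coeff k)]
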